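/- arXiv:2001.01125 — 5 statements merged into one kernel-verified Lean document; each statement's English description precedes it below -/
import Mathlib

section
/- For every number of bins m ≥ 2, the Adversary has a winning strategy in the Online Bin Stretching game Game(m, 4, 3); consequently no online bin stretching algorithm on m bins has stretching factor smaller than 4/3. -/
/-- `AddToBin St e b` increases the load of the `b`-th bin of `St` by `e`
(appending a new bin of load `e` if `b` is beyond the length of `St`). -/
def AddToBin : List ℕ → ℕ → ℕ → List ℕ
  | [], e, _ => [e]
  | x :: s, e, 0 => (x + e) :: s
  | x :: s, e, k + 1 => x :: AddToBin s e k

/-- The load of the most loaded bin. -/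
def MaxBinValue (St : List ℕ) : ℕ := St.foldr max 0

/-- `Packable m g ℓ` : the items of `ℓ` can be packed into `m` bins,
each of total size at most `g`. -/
def Packable (m g : ℕ) (ℓ : List ℕ) : Prop :=
  ∃ P : List (List ℕ), P.length = m ∧ (∀ B ∈ P, B.sum ≤ g) ∧ P.flatten.Perm ℓ

/-- `AdvWins m t g ℓ St` : the Adversary has a winning strategy in the Online Bin
Stretching game `Game(m,t,g)` starting from the previously sent items `ℓ` and the
current bin loads `St` — the property `LowerBoundBS(ℓ, St)`.  Either the Adversary
has already won (some bin has load at least `t`, and all items sent so far can be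
packed into `m` bins of capacity `g`), or the Adversary can send some positive item
`e` such that whatever bin `b < m` the Algorithm packs it into, the Adversary still
has a winning strategy. -/
inductive AdvWins (m t g : ℕ) : List ℕ → List ℕ → Prop
  | win (ℓ St : List ℕ) : t ≤ MaxBinValue St → Packable m g ℓ → AdvWins m t g ℓ St
  | step (ℓ St : List ℕ) (e : ℕ) : 0 < e →
      (∀ b, b < m → AdvWins m t g (e :: ℓ) (AddToBin St e b)) →
      AdvWins m t g ℓ St

/-!
The Adversary sends items of size 1 as long as some bin is empty. If every bin ends up with
load 1, an item of size 3 brings some bin to 4, while the items pack as `{3}, {1, 1}, {1}, …`.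
Otherwise the Algorithm has put two items of size 1 into one bin, and the Adversary switches to
items of size 2. Each of them either lands on a bin of load at least 2, reaching 4, or turns a bin
of load at most 1 into one of load at least 2; as one bin already has load 2, the latter happens
fewer than `m` times, so at most `m` items of size 2 and `m` of size 1 have been sent, and these
pack in pairs `{2, 1}`.
-/

open List

theorem addToBin_eq_set {St : List ℕ} {b : ℕ} (e : ℕ) (hb : b < St.length) :
    AddToBin St e b = St.set b (St[b] + e) := by
  induction St generalizing b with
  | nil => simp at hb
  | cons x s ih =>
    cases b with
    | zero => rfl
    | succ k => simp [AddToBin, ih (Nat.lt_of_succ_lt_succ hb)]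

theorem le_maxBinValue {x : ℕ} {St : List ℕ} (hx : x ∈ St) : x ≤ MaxBinValue St :=
  le_max_of_le (a := x) hx le_rfl

theorem AdvWins.win_addToBin {m t g e b : ℕ} {ℓ St : List ℕ} (hb : b < St.length)
    (ht : t ≤ St[b] + e) (hℓ : Packable m g ℓ) : AdvWins m t g ℓ (AddToBin St e b) := by
  refine .win _ _ (ht.trans (le_maxBinValue ?_)) hℓ
  rw [addToBin_eq_set e hb]
  exact mem_set hb _

theorem packable_replicate_append_replicate {m g a b j k : ℕ} (hab : a + b ≤ g) (hj : j ≤ m)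
    (hk : k ≤ m) : Packable m g (replicate j a ++ replicate k b) := by
  set p := min j k
  refine ⟨replicate p [a, b] ++ replicate (j - p) [a] ++ replicate (k - p) [b] ++
    replicate (m - (j + k - p)) [], by simp only [length_append, length_replicate]; omega, ?_, ?_⟩
  · intro B hB
    simp only [mem_append, mem_replicate] at hB
    rcases hB with ((h | h) | h) | h <;> simp only [h.2, sum_cons, sum_nil] <;> omega
  · rw [perm_iff_count]
    intro x
    simp only [flatten_append, count_append, count_flatten, map_replicate, sum_replicate,
      count_replicate, count_cons, count_nil, smul_eq_mul]
    split_ifs <;> simp_all <;> omega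

theorem packable_cons_replicate {m g c a : ℕ} (hc : c ≤ g) (ha : 2 * a ≤ g) (hm : 2 ≤ m) :
    Packable m g (c :: replicate m a) := by
  obtain ⟨n, rfl⟩ := Nat.exists_eq_add_of_le' hm
  refine ⟨[c] :: [a, a] :: replicate n [a], by simp, ?_, ?_⟩
  · intro B hB
    simp only [mem_cons, mem_replicate] at hB
    rcases hB with rfl | rfl | ⟨-, rfl⟩ <;> simp only [sum_cons, sum_nil] <;> omega
  · simp [replicate_succ, flatten_replicate_singleton]

theorem advWins_twos {m j k : ℕ} {St : List ℕ} (hlen : St.length = m) (hk : k ≤ m)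
    (hj : j + St.countP (· ≤ 1) < m) :
    AdvWins m 4 3 (replicate j 2 ++ replicate k 1) St := by
  refine .step _ _ 2 two_pos fun b hb => ?_
  have hb' : b < St.length := hlen ▸ hb
  rw [← cons_append, ← replicate_succ]
  by_cases hlight : St[b] ≤ 1
  · have hcount : (AddToBin St 2 b).countP (· ≤ 1) + 1 = St.countP (· ≤ 1) := by
      have hpos :=
        countP_pos_iff (p := (· ≤ 1)).2 ⟨St[b], getElem_mem hb', by simpa using hlight⟩
      rw [addToBin_eq_set 2 hb', countP_set hb', if_pos (by simpa), if_neg (by simp)]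
      omega
    exact advWins_twos (by simp [addToBin_eq_set 2 hb', hlen]) hk (by omega)
  · exact .win_addToBin hb' (by omega) (packable_replicate_append_replicate le_rfl (by omega) hk)
termination_by St.countP (· ≤ 1)

theorem advWins_ones {m k : ℕ} {St : List ℕ} (hm : 2 ≤ m) (hlen : St.length = m)
    (hSt : ∀ x ∈ St, x ≤ 1) (hk : k + St.count 0 = m) :
    AdvWins m 4 3 (replicate k 1) St := by
  by_cases hfull : St.count 0 = 0
  · refine .step _ _ 3 three_pos fun b hb => ?_
    have hb' : b < St.length := hlen ▸ hb
    have hone : St[b] = 1 := by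
      have hle := hSt _ (getElem_mem hb')
      have hne : St[b] ≠ 0 := fun h => count_eq_zero.1 hfull (h ▸ getElem_mem hb')
      omega
    refine .win_addToBin hb' (by omega) ?_
    rw [show k = m by omega]
    exact packable_cons_replicate le_rfl (by norm_num) hm
  · refine .step _ _ 1 one_pos fun b hb => ?_
    have hb' : b < St.length := hlen ▸ hb
    rw [← replicate_succ, addToBin_eq_set 1 hb']
    by_cases hzero : St[b] = 0
    · have hcount : (St.set b (St[b] + 1)).count 0 + 1 = St.count 0 := by
        rw [count_set hb', if_pos (by simp [hzero]), if_neg (by simp)]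
        omega
      refine advWins_ones hm (by simpa using hlen) (fun x hx => ?_) (by omega)
      rcases mem_or_eq_of_mem_set hx with hx | rfl
      · exact hSt x hx
      · omega
    · have hheavy : (St.set b (St[b] + 1)).countP (· ≤ 1) < m := by
        simpa [hlen] using countP_lt_length_iff.2 ⟨_, mem_set hb' _, by simpa using hzero⟩
      simpa using advWins_twos (j := 0) (by simpa using hlen) (by omega) (by simpa using hheavy)
termination_by St.count 0

/-- For every number of bins `m ≥ 2`, the Adversary has a winning strategy in the
Online Bin Stretching game `Game(m, 4, 3)` from the empty item list and all-zero
bin loads; hence no online bin stretching algorithm on `m` bins has stretching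
factor smaller than `4/3`. -/
theorem lowerBoundBS_four_thirds (m : ℕ) (hm : 2 ≤ m) :
    AdvWins m 4 3 [] (List.replicate m 0) := by
  simpa using advWins_ones (k := 0) hm (length_replicate ..) (by simp) (by simp)
end

section
/- (Good Situation 1) In the Online Bin Stretching game Game(m,t,g) with α := (t−1) − g ≥ 0, let (L, I) be a bin configuration with loads L_1, …, L_m such that the total load of all bins except the last one satisfies L_1 + … + L_{m−1} ≥ (m−1)·g − α. Then the Algorithm has a winning strategy from (L, I): there is a strategy for the Algorithm (packing every further item into the last bin) that, against every continuation of items for which the full multiset of items remains packable into m bins of capacity g, keeps every bin load at most t − 1. -/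
/-- `BinConfig m L I` : `(L, I)` is a bin configuration on `m` bins: `L` is the
`m`-tuple of bin loads and the multiset of items `I` can be packed into the `m`
bins producing exactly the loads `L`. -/
def BinConfig (m : ℕ) (L I : List ℕ) : Prop :=
  L.length = m ∧ ∃ P : List (List ℕ), P.map List.sum = L ∧ P.flatten.Perm I

/-- `RunAlg σ hist St es` : the bin loads obtained from the loads `St` after the
sequence of items `es` has arrived (one at a time) and each item has been packed by
the online strategy `σ`, which chooses a bin given the items sent so far, the
current loads and the incoming item; `hist` is the list of previously sent items. -/
def RunAlg (σ : List ℕ → List ℕ → ℕ → ℕ) : List ℕ → List ℕ → List ℕ → List ℕ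
  | _, St, [] => St
  | hist, St, e :: es => RunAlg σ (e :: hist) (AddToBin St e (σ hist St e)) es

/-- `AlgWins m t g ℓ St` : the Algorithm has a winning strategy in the Online Bin
Stretching game `Game(m,t,g)` from the state with already-sent items `ℓ` and bin
loads `St`: there is an online strategy (always choosing a bin index `< m`) such
that, against every continuation `es` of positive items for which the full multiset
of items remains packable into `m` bins of capacity `g`, every bin load stays at
most `t - 1` (loads only grow, so it suffices that the final loads are at most
`t - 1` for every admissible continuation, each prefix of an admissible continuation
being itself admissible). -/
def AlgWins (m t g : ℕ) (ℓ St : List ℕ) : Prop :=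
  ∃ σ : List ℕ → List ℕ → ℕ → ℕ,
    (∀ hist L e, σ hist L e < m) ∧
    ∀ es : List ℕ, (∀ e ∈ es, 0 < e) → Packable m g (es ++ ℓ) →
      MaxBinValue (RunAlg σ ℓ St es) ≤ t - 1

/-!
Put every further item into the last bin. The other bins keep their loads, which are at
most `t - 1`. All items, old and new, fit into `m` bins of capacity `g`, so their total is at
most `m·g`; as the first `m - 1` bins already carry at least `(m-1)·g - α`, the last bin
never receives more than `g + α = t - 1`.
-/

lemma maxBinValue_le_iff (l : List ℕ) (n : ℕ) :
    MaxBinValue l ≤ n ↔ ∀ x ∈ l, x ≤ n := by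
  induction l with
  | nil => simp [MaxBinValue]
  | cons a l ih =>
    rw [show MaxBinValue (a :: l) = max a (MaxBinValue l) from rfl, max_le_iff, ih]
    simp

lemma addToBin_append_singleton_length (l : List ℕ) (x e : ℕ) :
    AddToBin (l ++ [x]) e l.length = l ++ [x + e] := by
  induction l with
  | nil => rfl
  | cons a l ih => simp [AddToBin, ih]

lemma runAlg_const_length_append_singleton (l : List ℕ) (x : ℕ) (hist es : List ℕ) :
    RunAlg (fun _ _ _ => l.length) hist (l ++ [x]) es = l ++ [x + es.sum] := by
  induction es generalizing hist x with
  | nil => rfl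
  | cons e es ih => simp [RunAlg, addToBin_append_singleton_length, ih, Nat.add_assoc]

lemma Packable.sum_le {m g : ℕ} {ℓ : List ℕ} (h : Packable m g ℓ) : ℓ.sum ≤ m * g := by
  obtain ⟨P, hlen, hcap, hperm⟩ := h
  have hsums : ∀ s ∈ P.map List.sum, s ≤ g := by simpa using hcap
  calc ℓ.sum = (P.map List.sum).sum := by rw [← hperm.sum_eq, List.sum_flatten]
    _ ≤ (P.map List.sum).length • g := List.sum_le_card_nsmul _ _ hsums
    _ = m * g := by simp [hlen]

lemma BinConfig.sum_eq {m : ℕ} {L I : List ℕ} (h : BinConfig m L I) : I.sum = L.sum := by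
  obtain ⟨-, P, rfl, hperm⟩ := h
  rw [← hperm.sum_eq, List.sum_flatten]

/-- Good Situation 1: in `Game(m,t,g)` with `α = (t-1) - g ≥ 0`, if `(L, I)` is a
bin configuration (with all loads at most `t-1`, as for every state reached in the
game) whose total load on all bins but the last one is at least `(m-1)·g - α`, then
the Algorithm has a winning strategy from `(L, I)`: there is a strategy (packing
every further item into the last bin) keeping every bin load at most `t - 1`
against every continuation that stays packable into `m` bins of capacity `g`. -/
theorem good_situation_one (m t g : ℕ) (hm : 0 < m) (ht : g + 1 ≤ t)
    (L I : List ℕ) (hconf : BinConfig m L I) (hsafe : MaxBinValue L ≤ t - 1)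
    (hload : (m - 1) * g - ((t - 1) - g) ≤ L.dropLast.sum) :
    AlgWins m t g I L := by
  have hsum := hconf.sum_eq
  obtain ⟨L', x, rfl⟩ : ∃ L' x, L = L' ++ [x] := by
    refine L.eq_nil_or_concat'.resolve_left fun h => hm.ne' ?_
    rw [← hconf.1, h, List.length_nil]
  obtain rfl : m = L'.length + 1 := by simpa using hconf.1.symm
  refine ⟨fun _ _ _ => L'.length, fun _ _ _ => L'.length.lt_succ_self, fun es _ hpack => ?_⟩
  have hcap := hpack.sum_le
  rw [List.sum_append, hsum, List.sum_append, List.sum_singleton, Nat.succ_mul] at hcap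
  rw [List.dropLast_concat, Nat.add_sub_cancel] at hload
  rw [maxBinValue_le_iff, List.forall_mem_append] at hsafe
  rw [runAlg_const_length_append_singleton, maxBinValue_le_iff, List.forall_mem_append]
  refine ⟨hsafe.1, ?_⟩
  simp only [List.mem_singleton, forall_eq]
  omega
end

section
/- (Large item heuristic) In the Online Bin Stretching game Game(m,t,g), let (L, I) be a bin configuration with loads sorted in non-increasing order L_1 ≥ … ≥ L_m, and suppose the k-th bin has load l := L_k ≥ t − g. Let i be a positive integer item size such that (1) i + l ≥ t, and (2) for every bin index b with k < b ≤ m, two items of size i cannot both be packed into bin b without reaching the target, i.e., 2i + L_b ≥ t. If the multiset I together with m − k + 1 additional items of size i can be packed into m bins each of total size at most g, then the Adversary has a winning strategy from (L, I): sending m − k + 1 items of size i forces some bin to reach load at least t, so LowerBoundBS(I, L) holds. -/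
/-!
Call a bin *safe* if an item of size `i` placed into it stays below the target `t`. Since the
loads are sorted and `L_k + i ≥ t`, only the bins `k+1, …, m` can be safe, so there are at most
`m - k` of them, and by (2) a safe bin stops being safe as soon as it receives an item of size `i`.
Hence among `m - k + 1` items of size `i` some item lands in an unsafe bin and reaches `t`.
The Adversary still sends all of them, so that at the end the items sent are exactly those of the
packing assumed in the hypothesis.
-/

lemma length_addToBin {St : List ℕ} {b : ℕ} (e : ℕ) (hb : b < St.length) :
    (AddToBin St e b).length = St.length := by
  induction St generalizing b with
  | nil => simp at hb
  | cons x s ih =>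
    cases b with
    | zero => simp [AddToBin]
    | succ b => simp [AddToBin, ih (Nat.lt_of_succ_lt_succ hb)]

lemma getD_addToBin_self {St : List ℕ} {b : ℕ} (e : ℕ) (hb : b < St.length) :
    (AddToBin St e b).getD b 0 = St.getD b 0 + e := by
  induction St generalizing b with
  | nil => simp at hb
  | cons x s ih =>
    cases b with
    | zero => simp [AddToBin]
    | succ b => simpa [AddToBin] using ih (Nat.lt_of_succ_lt_succ hb)

lemma getD_addToBin_of_ne {St : List ℕ} {b b' : ℕ} (e : ℕ) (hb : b < St.length) (hne : b' ≠ b) :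
    (AddToBin St e b).getD b' 0 = St.getD b' 0 := by
  induction St generalizing b b' with
  | nil => simp at hb
  | cons x s ih =>
    cases b <;> cases b'
    · exact absurd rfl hne
    all_goals simp_all [AddToBin]

lemma getD_le_getD_addToBin (St : List ℕ) (e b b' : ℕ) :
    St.getD b' 0 ≤ (AddToBin St e b).getD b' 0 := by
  induction St generalizing b b' with
  | nil => cases b' <;> simp [AddToBin]
  | cons x s ih =>
    cases b <;> cases b' <;> simp only [AddToBin, List.getD_cons_zero, List.getD_cons_succ]
    · exact Nat.le_add_right x e
    all_goals first | exact le_rfl | exact ih _ _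

lemma getD_le_maxBinValue (St : List ℕ) (b : ℕ) : St.getD b 0 ≤ MaxBinValue St := by
  induction St generalizing b with
  | nil => simp [MaxBinValue]
  | cons x s ih =>
    cases b with
    | zero => simp [MaxBinValue]
    | succ b => exact (ih b).trans (le_max_right x _)

lemma getD_le_getD_of_pairwise_ge {α : Type*} [Preorder α] {L : List α} (d : α)
    (hL : L.Pairwise (· ≥ ·)) {a b : ℕ} (hab : a ≤ b) (hb : b < L.length) :
    L.getD b d ≤ L.getD a d := by
  rw [List.getD_eq_getElem L d hb, List.getD_eq_getElem L d (hab.trans_lt hb)]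
  exact hL.rel_get_of_le hab

lemma advWins_of_le_getD {m t g i : ℕ} (hi : 0 < i) :
    ∀ (n : ℕ) {ℓ St : List ℕ} {b : ℕ}, t ≤ St.getD b 0 →
      Packable m g (List.replicate n i ++ ℓ) → AdvWins m t g ℓ St
  | 0, _, _, _, hb, hpack => .win _ _ (hb.trans (getD_le_maxBinValue _ _)) (by simpa using hpack)
  | n + 1, ℓ, St, b, hb, hpack =>
    .step _ _ i hi fun b' _ =>
      advWins_of_le_getD hi n (hb.trans (getD_le_getD_addToBin St i b' b))
        (by simpa [List.replicate_succ'] using hpack)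

def safeBins (m t i : ℕ) (St : List ℕ) : Finset ℕ :=
  (Finset.range m).filter fun b => St.getD b 0 + i < t

lemma safeBins_addToBin {m t i b : ℕ} {St : List ℕ} (hb : b < St.length)
    (hdouble : t ≤ St.getD b 0 + 2 * i) :
    safeBins m t i (AddToBin St i b) = (safeBins m t i St).erase b := by
  ext b'
  by_cases hb' : b' = b
  · subst hb'
    simp only [safeBins, Finset.mem_filter, Finset.mem_range, Finset.mem_erase,
      getD_addToBin_self i hb]
    omega
  · simp only [safeBins, Finset.mem_filter, Finset.mem_range, Finset.mem_erase,
      getD_addToBin_of_ne i hb hb', hb', ne_eq, not_false_eq_true, true_and]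

lemma advWins_of_card_safeBins_lt {m t g i : ℕ} (hi : 0 < i) :
    ∀ (n : ℕ) {ℓ St : List ℕ}, St.length = m →
      (∀ b ∈ safeBins m t i St, t ≤ St.getD b 0 + 2 * i) →
      (safeBins m t i St).card < n →
      Packable m g (List.replicate n i ++ ℓ) → AdvWins m t g ℓ St
  | 0, _, _, _, _, hcard, _ => absurd hcard (Nat.not_lt_zero _)
  | n + 1, ℓ, St, hlen, hdouble, hcard, hpack => by
    have hpack' : Packable m g (List.replicate n i ++ i :: ℓ) := by
      simpa [List.replicate_succ'] using hpack
    refine .step _ _ i hi fun b hbm => ?_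
    have hb : b < St.length := hlen ▸ hbm
    by_cases hsafe : b ∈ safeBins m t i St
    · have hbins := safeBins_addToBin (m := m) hb (hdouble b hsafe)
      refine advWins_of_card_safeBins_lt hi n ((length_addToBin i hb).trans hlen) ?_ ?_ hpack'
      · intro b' hb'
        rw [hbins, Finset.mem_erase] at hb'
        rw [getD_addToBin_of_ne i hb hb'.1]
        exact hdouble b' hb'.2
      · rw [hbins]
        exact Nat.lt_of_lt_of_le (Finset.card_erase_lt_of_mem hsafe) (Nat.le_of_lt_succ hcard)
    · have hfull : t ≤ (AddToBin St i b).getD b 0 := by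
        simp only [safeBins, Finset.mem_filter, Finset.mem_range] at hsafe
        rw [getD_addToBin_self i hb]
        omega
      exact advWins_of_le_getD hi n hfull hpack'

theorem large_item_heuristic_general (m t g : ℕ)
    (L I : List ℕ) (hconf : BinConfig m L I) (hsorted : L.Pairwise (· ≥ ·))
    (k : ℕ) (hk1 : 1 ≤ k) (hkm : k ≤ m)
    (i : ℕ) (hi : 0 < i)
    (h1 : t ≤ i + L.getD (k - 1) 0)
    (h2 : ∀ b, k < b → b ≤ m → t ≤ 2 * i + L.getD (b - 1) 0)
    (hpack : Packable m g (List.replicate (m - k + 1) i ++ I)) :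
    AdvWins m t g I L := by
  obtain ⟨hL, -⟩ := hconf
  have hsafe : safeBins m t i L ⊆ Finset.Ico k m := by
    intro b hb
    simp only [safeBins, Finset.mem_filter, Finset.mem_range] at hb
    refine Finset.mem_Ico.mpr ⟨Nat.le_of_not_lt fun hbk => ?_, hb.1⟩
    have := getD_le_getD_of_pairwise_ge 0 hsorted (a := b) (b := k - 1) (by omega) (by omega)
    omega
  refine advWins_of_card_safeBins_lt hi (m - k + 1) hL (fun b hb => ?_) ?_ hpack
  · have hbk := Finset.mem_Ico.mp (hsafe hb)
    simpa [add_comm] using h2 (b + 1) (by omega) (by omega)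
  · have := Finset.card_le_card hsafe
    rw [Nat.card_Ico] at this
    omega

/-- Large item heuristic: in `Game(m,t,g)`, let `(L, I)` be a bin configuration
with loads sorted in non-increasing order `L₁ ≥ … ≥ L_m`, and suppose the `k`-th
bin (`1 ≤ k ≤ m`) has load `l = L_k ≥ t - g`.  Let `i` be a positive item size with
(1) `i + l ≥ t` and (2) for every bin `b` with `k < b ≤ m`, `2·i + L_b ≥ t`.  If
`I` together with `m - k + 1` additional items of size `i` can be packed into `m`
bins each of total size at most `g`, then the Adversary has a winning strategy from
`(L, I)` (sending `m - k + 1` items of size `i` forces some bin to reach load at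
least `t`), i.e. `LowerBoundBS(I, L)` holds. -/
theorem large_item_heuristic (m t g : ℕ) (hm : 0 < m)
    (L I : List ℕ) (hconf : BinConfig m L I) (hsorted : L.Pairwise (· ≥ ·))
    (k : ℕ) (hk1 : 1 ≤ k) (hkm : k ≤ m)
    (hl : t - g ≤ L.getD (k - 1) 0)
    (i : ℕ) (hi : 0 < i)
    (h1 : t ≤ i + L.getD (k - 1) 0)
    (h2 : ∀ b, k < b → b ≤ m → t ≤ 2 * i + L.getD (b - 1) 0)
    (hpack : Packable m g (List.replicate (m - k + 1) i ++ I)) :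
    AdvWins m t g I L :=
  large_item_heuristic_general m t g L I hconf hsorted k hk1 hkm i hi h1 h2 hpack
end

section
/- (Correctness of the Coq formulation) Let m, t, g be natural numbers with m > 0. For every list of natural numbers ℓ, every list of natural numbers St, and every natural number X with X > m·g + 1 − (sum of the elements of ℓ), if OnlineInfeasible X ℓ St holds, then LowerBoundBS(ℓ, St) holds, i.e., the Adversary has a winning strategy in the Online Bin Stretching game Game(m,t,g) starting from previously sent items ℓ and current bin loads St. -/
/-- The load of a bin given the list of its items. -/
def BinSum (B : List ℕ) : ℕ := B.sum

/-- The largest bin load of a packing, given as a list of bins (lists of items). -/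
def MaxBinSum (P : List (List ℕ)) : ℕ := (P.map BinSum).foldr max 0

/-- `CompletePacking ℓ P` : the packing `P` uses at least all the items of `ℓ`:
every natural number occurs in the concatenation of `P` at least as many times
as in `ℓ`. -/
def CompletePacking (ℓ : List ℕ) (P : List (List ℕ)) : Prop :=
  ∀ e, ℓ.count e ≤ P.flatten.count e

/-- `SolutionPacking m g ℓ P` : `P` is a certificate that the items of `ℓ` can be
packed into `m` bins of capacity `g`. -/
def SolutionPacking (m g : ℕ) (ℓ : List ℕ) (P : List (List ℕ)) : Prop :=
  CompletePacking ℓ P ∧ P.length = m ∧ MaxBinSum P ≤ g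

/-- The inductive predicate `OnlineInfeasible m t g X ℓ St` of the Coq
formalization: either (Overflow) some bin load of `St` is at least `t` and there
is a packing certificate for `ℓ`, or (Deadend) `St` has length at most `m` and
there is a positive item `e` (here an explicit constructor argument, which is
equivalent to the existential quantification of the Coq definition) such that,
whatever bin `b < m` it is packed into, the resulting state is again
`OnlineInfeasible` with fuel decreased by one. -/
inductive OnlineInfeasible (m t g : ℕ) : ℕ → List ℕ → List ℕ → Prop
  | overflow (X : ℕ) (ℓ St : List ℕ) : t ≤ MaxBinValue St →
      (∃ P, SolutionPacking m g ℓ P) → OnlineInfeasible m t g X ℓ St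
  | deadend (X : ℕ) (ℓ St : List ℕ) (e : ℕ) : St.length ≤ m → 0 < e →
      (∀ b, b < m → OnlineInfeasible m t g X (e :: ℓ) (AddToBin St e b)) →
      OnlineInfeasible m t g (X + 1) ℓ St

/-!
An `OnlineInfeasible` derivation is already a strategy for the Adversary: each Overflow leaf is
a won position and each Deadend node prescribes the next item. The only work is at the leaves,
whose packing certificate may contain more items than `ℓ`; shrinking each bin to the items of
`ℓ` not yet placed yields a packing of exactly `ℓ`.
-/

open List

lemma List.Subperm.sum_le_sum {l₁ l₂ : List ℕ} (h : l₁ <+~ l₂) : l₁.sum ≤ l₂.sum := by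
  obtain ⟨l, hperm, hsub⟩ := h
  rw [← hperm.sum_eq]
  exact hsub.sum_le_sum fun a _ => a.zero_le

lemma sum_le_maxBinSum_of_mem {P : List (List ℕ)} {B : List ℕ} (hB : B ∈ P) :
    B.sum ≤ MaxBinSum P := by
  induction P with
  | nil => cases hB
  | cons C P ih =>
    simp only [MaxBinSum, BinSum, map_cons, foldr_cons] at ih ⊢
    rcases mem_cons.mp hB with rfl | hB
    · exact le_max_left _ _
    · exact (ih hB).trans (le_max_right _ _)

theorem packable_of_subperm_flatten {g : ℕ} :
    ∀ {P : List (List ℕ)} {ℓ : List ℕ}, (∀ B ∈ P, B.sum ≤ g) → ℓ <+~ P.flatten →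
      Packable P.length g ℓ
  | [], ℓ, _, hℓ => ⟨[], rfl, by simp, by simp [subperm_nil.mp hℓ]⟩
  | B :: P, ℓ, hP, hℓ => by
    have hrest : ℓ.diff B <+~ P.flatten := by
      rw [← Multiset.coe_le, ← Multiset.coe_sub, tsub_le_iff_left, Multiset.coe_add]
      simpa using Multiset.coe_le.mpr hℓ
    obtain ⟨Q, hlen, hQ, hperm⟩ :=
      packable_of_subperm_flatten (fun C hC => hP C (mem_cons_of_mem _ hC)) hrest
    refine ⟨ℓ.bagInter B :: Q, by simp [hlen], ?_, ?_⟩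
    · have hinter : ℓ.bagInter B <+~ B := by
        rw [← Multiset.coe_le, ← Multiset.coe_inter]
        exact Multiset.inter_le_right
      simpa [hinter.sum_le_sum.trans (hP B mem_cons_self)] using hQ
    · rw [flatten_cons, ← Multiset.coe_eq_coe, ← Multiset.coe_add, Multiset.coe_eq_coe.mpr hperm,
        ← Multiset.coe_inter, ← Multiset.coe_sub, add_comm, Multiset.sub_add_inter]

theorem SolutionPacking.packable {m g : ℕ} {ℓ : List ℕ} {P : List (List ℕ)}
    (h : SolutionPacking m g ℓ P) : Packable m g ℓ := by
  obtain ⟨hcomplete, rfl, hmax⟩ := h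
  exact packable_of_subperm_flatten (fun B hB => (sum_le_maxBinSum_of_mem hB).trans hmax)
    (subperm_ext_iff.mpr fun e _ => hcomplete e)

theorem onlineInfeasible_implies_lowerBoundBS_general (m t g : ℕ)
    (ℓ St : List ℕ) (X : ℕ)
    (h : OnlineInfeasible m t g X ℓ St) :
    AdvWins m t g ℓ St := by
  induction h with
  | overflow _ ℓ St hload hpacking =>
    obtain ⟨P, hP⟩ := hpacking
    exact .win ℓ St hload hP.packable
  | deadend _ ℓ St e _ he _ ih => exact .step ℓ St e he ih

/-- Correctness of the Coq formulation: for every `ℓ`, `St` and every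
`X > m·g + 1 - (sum of ℓ)` (with truncated natural subtraction, as in Coq),
if `OnlineInfeasible X ℓ St` holds then `LowerBoundBS(ℓ, St)` holds, i.e. the
Adversary has a winning strategy in `Game(m,t,g)` from previously sent items `ℓ`
and current bin loads `St`. -/
theorem onlineInfeasible_implies_lowerBoundBS (m t g : ℕ) (hm : 0 < m)
    (ℓ St : List ℕ) (X : ℕ) (hX : m * g + 1 - ℓ.sum < X)
    (h : OnlineInfeasible m t g X ℓ St) :
    AdvWins m t g ℓ St :=
  onlineInfeasible_implies_lowerBoundBS_general m t g ℓ St X h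
end

section
/- (Corollary) Let m, t, g be natural numbers with m > 0. If LowerBoundCoq holds, i.e., there exists a list s of at most m zeros such that OnlineInfeasible (m·g + 2) [] s holds, then LowerBoundBS holds for Game(m,t,g), i.e., the Adversary has a winning strategy in the Online Bin Stretching game Game(m,t,g) from the empty item list and all-zero bin loads. -/
/-- `Iszero s` : `s` is a list of length at most `m` all of whose elements are
zero (starting bin loads, where some bins may be omitted). -/
def Iszero (m : ℕ) (s : List ℕ) : Prop :=
  s.length ≤ m ∧ ∀ e ∈ s, e = 0

/-!
Bins missing at the end of a load list behave exactly like empty bins, and the order of the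
bins matters in neither game, so two load lists describe the same position as soon as their
paddings with zeros to `m` entries are permutations of each other. Under this identification a
derivation of `OnlineInfeasible` is an Adversary strategy: when the Algorithm packs the item
into bin `b'` of one list, the derivation has a branch for a bin `b` of the other list with the
same load, and the two resulting positions are again identified. The winning conditions agree
because the maximal load is invariant, and a `SolutionPacking` certificate, which may hold extra
items, becomes an exact packing once those are deleted.
-/

namespace List

theorem modify_perm_cons_eraseIdx {α : Type*} {l : List α} {i : ℕ} (f : α → α)
    (h : i < l.length) : (l.modify i f).Perm (f l[i] :: l.eraseIdx i) := by
  rw [modify_eq_take_cons_drop h, eraseIdx_eq_take_drop_succ]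
  exact perm_middle

theorem Perm.modify_perm_modify {α : Type*} {l₁ l₂ : List α} {i j : ℕ} (h : l₁.Perm l₂)
    (f : α → α) (hi : i < l₁.length) (hj : j < l₂.length) (hij : l₁[i] = l₂[j]) :
    (l₁.modify i f).Perm (l₂.modify j f) := by
  have herase : (l₁.eraseIdx i).Perm (l₂.eraseIdx j) :=
    (perm_eraseIdx_of_getElem?_eq (by simp [hi, hj, hij])).2 h
  calc (l₁.modify i f).Perm (f l₁[i] :: l₁.eraseIdx i) := modify_perm_cons_eraseIdx f hi
    _ = f l₂[j] :: l₁.eraseIdx i := by rw [hij]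
    (_ : List α).Perm (f l₂[j] :: l₂.eraseIdx j) := herase.cons _
    (_ : List α).Perm (l₂.modify j f) := (modify_perm_cons_eraseIdx f hj).symm

theorem rightpad_succ_cons {α : Type*} (n : ℕ) (a x : α) (l : List α) :
    rightpad (n + 1) a (x :: l) = x :: rightpad n a l := by
  simp [rightpad]

theorem Perm.maxBinValue_eq {l₁ l₂ : List ℕ} (h : l₁.Perm l₂) :
    MaxBinValue l₁ = MaxBinValue l₂ :=
  congrArg Multiset.sup (Multiset.coe_eq_coe.2 h)

end List

open List

theorem maxBinValue_rightpad (m : ℕ) (St : List ℕ) :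
    MaxBinValue (rightpad m 0 St) = MaxBinValue St := by
  unfold MaxBinValue rightpad
  rw [foldr_append]
  congr
  induction m - St.length <;> simp_all [replicate_succ]

theorem length_addToBin_le {m b : ℕ} {St : List ℕ} (e : ℕ) (hSt : St.length ≤ m)
    (hb : b < m) :
    (AddToBin St e b).length ≤ m := by
  induction St generalizing m b with
  | nil => simpa [AddToBin] using Nat.one_le_of_lt hb
  | cons x s ih =>
    obtain ⟨m, rfl⟩ := Nat.exists_eq_add_one_of_ne_zero (Nat.ne_zero_of_lt hb)
    cases b with
    | zero => simpa [AddToBin] using hSt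
    | succ k => simpa [AddToBin] using ih (by simpa using hSt) (Nat.lt_of_succ_lt_succ hb)

theorem rightpad_addToBin_perm {m b : ℕ} (St : List ℕ) (e : ℕ) (hb : b < m) :
    (rightpad m 0 (AddToBin St e b)).Perm ((rightpad m 0 St).modify b (· + e)) := by
  induction St generalizing m b with
  | nil =>
    obtain ⟨m, rfl⟩ := Nat.exists_eq_add_one_of_ne_zero (Nat.ne_zero_of_lt hb)
    have := (Perm.refl (replicate (m + 1) 0)).modify_perm_modify (· + e) (i := 0) (j := b)
      (by simp) (by simpa using hb) (by simp)
    simpa [AddToBin, rightpad, replicate_succ] using this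
  | cons x s ih =>
    obtain ⟨m, rfl⟩ := Nat.exists_eq_add_one_of_ne_zero (Nat.ne_zero_of_lt hb)
    cases b with
    | zero => simp [AddToBin]
    | succ k => simpa [AddToBin, rightpad_succ_cons] using ih (Nat.lt_of_succ_lt_succ hb)

theorem Packable.of_perm {m g : ℕ} {l₁ l₂ : List ℕ} (h : Packable m g l₁)
    (hl : l₁.Perm l₂) :
    Packable m g l₂ :=
  let ⟨P, hlen, hsum, hP⟩ := h
  ⟨P, hlen, hsum, hP.trans hl⟩

theorem packable_of_sublist_flatten {g : ℕ} {ℓ : List ℕ} {P : List (List ℕ)}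
    (hP : ∀ B ∈ P, B.sum ≤ g) (h : ℓ.Sublist P.flatten) : Packable P.length g ℓ := by
  induction P generalizing ℓ with
  | nil => exact ⟨[], rfl, by simp, by simpa using h⟩
  | cons B P ih =>
    obtain ⟨x, y, rfl, hx, hy⟩ := sublist_append_iff.1 (flatten_cons ▸ h)
    obtain ⟨P', hlen, hsum, hperm⟩ := ih (fun C hC ↦ hP C (mem_cons_of_mem B hC)) hy
    refine ⟨x :: P', by simp [hlen], ?_, by simpa using hperm.append_left x⟩
    rintro C (_ | ⟨_, hC⟩)
    · exact (hx.sum_le_sum fun _ _ ↦ Nat.zero_le _).trans (hP B mem_cons_self)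
    · exact hsum C hC

theorem OnlineInfeasible.advWins {m t g X : ℕ} {ℓ St : List ℕ}
    (h : OnlineInfeasible m t g X ℓ St) {St' : List ℕ} (hlen : St'.length ≤ m)
    (hperm : (rightpad m 0 St').Perm (rightpad m 0 St)) :
    AdvWins m t g ℓ St' := by
  induction h generalizing St' with
  | overflow _ ℓ St hmax hpack =>
    obtain ⟨P, hP⟩ := hpack
    refine AdvWins.win _ _ ?_ hP.packable
    rwa [← maxBinValue_rightpad m, hperm.maxBinValue_eq, maxBinValue_rightpad]
  | deadend _ ℓ St e hStm he _ ih =>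
    refine AdvWins.step _ _ e he fun b' hb' ↦ ?_
    have hb'pad : b' < (rightpad m 0 St').length := by rw [length_rightpad]; omega
    obtain ⟨b, hb, hbb'⟩ := mem_iff_getElem.1 (hperm.subset (getElem_mem hb'pad))
    have hbm : b < m := by rwa [length_rightpad, max_eq_left hStm] at hb
    refine ih b hbm (length_addToBin_le e hlen hb') ?_
    exact (rightpad_addToBin_perm St' e hb').trans
      ((hperm.symm.modify_perm_modify _ hb hb'pad hbb').symm.trans
        (rightpad_addToBin_perm St e hbm).symm)

theorem lowerBoundCoq_implies_lowerBoundBS_general (m t g : ℕ)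
    (h : ∃ s : List ℕ, Iszero m s ∧ OnlineInfeasible m t g (m * g + 2) [] s) :
    AdvWins m t g [] (List.replicate m 0) := by
  obtain ⟨s, ⟨hslen, hszero⟩, hs⟩ := h
  refine hs.advWins (by simp) (Perm.of_eq ?_)
  rw [eq_replicate_of_mem hszero]
  simp only [rightpad, length_replicate, ← replicate_add, Nat.add_sub_cancel' hslen,
    Nat.add_sub_cancel' le_rfl]

/-- Corollary: `LowerBoundCoq` implies `LowerBoundBS`.  If there exists a list `s`
of at most `m` zeros such that `OnlineInfeasible (m·g + 2) [] s` holds, then the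
Adversary has a winning strategy in the Online Bin Stretching game `Game(m,t,g)`
from the empty item list and all-zero bin loads. -/
theorem lowerBoundCoq_implies_lowerBoundBS (m t g : ℕ) (hm : 0 < m)
    (h : ∃ s : List ℕ, Iszero m s ∧ OnlineInfeasible m t g (m * g + 2) [] s) :
    AdvWins m t g [] (List.replicate m 0) :=
  lowerBoundCoq_implies_lowerBoundBS_general m t g h
end
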